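/- Let A be a layered automaton over a finite alphabet Σ, p a leaf state, x a priority, and let u·w be an infinite word admitting a run in ⟦A⟧ of the form p →u q →w, where every transition along u has priority ≥ x and every transition along the infinite run over w has priority ≥ x+1. Then the random walk of ⟦A⟧ over u·w starting from p almost surely eventually uses only transitions of priority ≥ x+1 (with probability 1 only finitely many transitions of priority ≤ x occur). -/

import Mathlib

open scoped Classical

noncomputable section

/-! ### Infinite words and the parity condition -/

/-- The minimal value occurring infinitely often in a sequence of priorities;
for (eventually) bounded sequences this is the `liminf`. -/
def minInfOften (pi : ℕ → ℕ) : ℕ := sInf {x : ℕ | ∀ N : ℕ, ∃ n : ℕ, N ≤ n ∧ pi n = x}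

/-- The (min-)parity acceptance condition: the liminf of the priorities is even. -/
def ParityAccept (pi : ℕ → ℕ) : Prop := Even (minInfOften pi)

/-- Prepend a finite word to an infinite word. -/
def prependW {α : Type} (u : List α) (w : ℕ → α) : ℕ → α := fun i =>
  if h : i < u.length then u.get ⟨i, h⟩ else w (i - u.length)

/-- The prefix of length `n` of an infinite word, as a list. -/
def wordPrefix {α : Type} (w : ℕ → α) (n : ℕ) : List α := List.ofFn (fun i : Fin n => w i)

/-- Drop the first `n` letters of an infinite word. -/
def wordDrop {α : Type} (w : ℕ → α) (n : ℕ) : ℕ → α := fun i => w (n + i)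

/-- The periodic infinite word `v^ω` (junk if `v = []`). -/
def perWord {α : Type} [Inhabited α] (v : List α) : ℕ → α := fun i => v.getD (i % v.length) default

/-! ### Layered automata -/

/-- A layered automaton over the alphabet `α` with `d` layers.  The (disjoint) layers
are encoded by the function `layer : Q → [1,d]`; each layer is a deterministic
transition system (partial transition function `δ`, which stays inside the layer);
`μ` sends each state of layer `x+1` to its parent in layer `x` (and is the identity
on layer `1`) and is a morphism of transition systems; layer `1` is complete, carries
the initial state, and all its states are reachable from the initial state. -/
structure Layered (Q α : Type) (d : ℕ) where
  layer : Q → ℕ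
  layer_pos : ∀ q, 1 ≤ layer q
  layer_le : ∀ q, layer q ≤ d
  δ : Q → α → Option Q
  δ_layer : ∀ q a q', δ q a = some q' → layer q' = layer q
  μ : Q → Q
  μ_layer : ∀ q, 1 < layer q → layer (μ q) + 1 = layer q
  μ_id : ∀ q, layer q = 1 → μ q = q
  μ_morph : ∀ q a q', 1 < layer q → δ q a = some q' → δ (μ q) a = some (μ q')
  init : Q
  init_layer : layer init = 1
  complete1 : ∀ q a, layer q = 1 → (δ q a).isSome = true
  reach1 : ∀ q, layer q = 1 →
    Relation.ReflTransGen (fun p p' => layer p = 1 ∧ ∃ a, δ p a = some p') init q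

namespace Layered

variable {Q R α : Type} {d d' : ℕ}

/-- The run of the (deterministic) layer transition systems on a finite word. -/
def runList (A : Layered Q α d) : Q → List α → Option Q
  | q, [] => some q
  | q, a :: u =>
    match A.δ q a with
    | some q' => runList A q' u
    | none => none

/-- `μ̂_x q`: the ancestor of `q` in layer `x` (image under the composed morphisms). -/
def muHat (A : Layered Q α d) (x : ℕ) (q : Q) : Q := (A.μ)^[A.layer q - x] q

/-- A leaf state: a state that is not in the image of any of the morphisms `μ_x`. -/
def IsLeaf (A : Layered Q α d) (q : Q) : Prop := ∀ p, 1 < A.layer p → A.μ p ≠ q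

/-- `layer(q,a)`: the largest layer `x ≤ layer q` in which `δ_x (μ̂_x q) a` is defined. -/
def layerOf (A : Layered Q α d) (q : Q) (a : α) : ℕ :=
  Nat.findGreatest (fun x => (A.δ (A.muHat x q) a).isSome = true) (A.layer q)

/-- A state `p` is an ancestor of `q`. -/
def IsAncestor (A : Layered Q α d) (p q : Q) : Prop :=
  A.layer p ≤ A.layer q ∧ A.muHat (A.layer p) q = p

/-! #### Safe languages and strong acceptance -/

/-- Membership of a finite word in the `x`-safe language of `q`. -/
def SafeFin (A : Layered Q α d) (x : ℕ) (q : Q) (u : List α) : Prop :=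
  (A.runList (A.muHat x q) u).isSome = true

/-- Membership of an infinite word in the `x`-safe language of `q`. -/
def SafeInf (A : Layered Q α d) (x : ℕ) (q : Q) (w : ℕ → α) : Prop :=
  ∀ n : ℕ, A.SafeFin x q (wordPrefix w n)

/-- `w` is strongly accepted by the state `p` (which lies in the even layer `x = layer p`):
`w` is `x`-safe from `p` and no decomposition `w = u·w'` admits a state `p'` of layer `x+1`
with a `u`-run from `p` to the parent of `p'` in `T_x` such that `w'` is `(x+1)`-safe from `p'`. -/
def StronglyAcc (A : Layered Q α d) (p : Q) (w : ℕ → α) : Prop :=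
  Even (A.layer p) ∧ A.SafeInf (A.layer p) p w ∧
  ∀ (n : ℕ) (p' : Q), A.layer p' = A.layer p + 1 →
    A.runList p (wordPrefix w n) = some (A.μ p') →
    ¬ A.SafeInf (A.layer p') p' (wordDrop w n)

/-- `w` is strongly rejected by `p` (lying in an odd layer). -/
def StronglyRej (A : Layered Q α d) (p : Q) (w : ℕ → α) : Prop :=
  Odd (A.layer p) ∧ A.SafeInf (A.layer p) p w ∧
  ∀ (n : ℕ) (p' : Q), A.layer p' = A.layer p + 1 →
    A.runList p (wordPrefix w n) = some (A.μ p') →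
    ¬ A.SafeInf (A.layer p') p' (wordDrop w n)

/-- Consistency: no two states with the same layer-1 ancestor strongly accept
resp. strongly reject a common infinite word. -/
def Consistent (A : Layered Q α d) : Prop :=
  ¬ ∃ (p p' : Q) (w : ℕ → α), A.muHat 1 p = A.muHat 1 p' ∧
      A.StronglyAcc p w ∧ A.StronglyRej p' w

/-- `w` is ultimately safe in layer `x`, for the automaton started in the
layer-1 state `q0`. -/
def UltSafeFrom (A : Layered Q α d) (q0 : Q) (x : ℕ) (w : ℕ → α) : Prop :=
  ∃ (n : ℕ) (p : Q), A.layer p = x ∧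
    A.runList q0 (wordPrefix w n) = some (A.muHat 1 p) ∧
    A.SafeInf x p (wordDrop w n)

/-- Layered acceptance from `q0`: the maximal layer in which `w` is ultimately safe is even. -/
def LayeredAcceptFrom (A : Layered Q α d) (q0 : Q) (w : ℕ → α) : Prop :=
  ∃ x : ℕ, Even x ∧ A.UltSafeFrom q0 x w ∧ ∀ y : ℕ, A.UltSafeFrom q0 y w → y ≤ x

/-- Layered rejection from `q0`: the maximal layer in which `w` is ultimately safe is odd. -/
def LayeredRejectFrom (A : Layered Q α d) (q0 : Q) (w : ℕ → α) : Prop :=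
  ∃ x : ℕ, Odd x ∧ A.UltSafeFrom q0 x w ∧ ∀ y : ℕ, A.UltSafeFrom q0 y w → y ≤ x

/-! #### The semantics automaton `⟦A⟧` (a simple-by-priorities alternating parity automaton) -/

/-- The priority of the letter `a` in the state `q` of `⟦A⟧`. -/
def semPrio (A : Layered Q α d) (q : Q) (a : α) : ℕ := A.layerOf q a

/-- The transitions of `⟦A⟧` (between leaf states): `q —a→ q'` iff, for
`x = layer(q,a)`, we have `δ_x (μ̂_x q) a = μ̂_x q'`; the transition carries priority `x`. -/
def semStep (A : Layered Q α d) (q : Q) (a : α) (q' : Q) : Prop :=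
  A.IsLeaf q' ∧ A.δ (A.muHat (A.layerOf q a) q) a = some (A.muHat (A.layerOf q a) q')

/-- Runs of `⟦A⟧` over the infinite word `w`, starting in `p`. -/
def IsSemRun (A : Layered Q α d) (w : ℕ → α) (p : Q) (ρ : ℕ → Q) : Prop :=
  ρ 0 = p ∧ ∀ i : ℕ, A.semStep (ρ i) (w i) (ρ (i + 1))

/-- The sequence of priorities produced by a run of `⟦A⟧` over `w`. -/
def runPrios (A : Layered Q α d) (w : ℕ → α) (ρ : ℕ → Q) : ℕ → ℕ :=
  fun i => A.semPrio (ρ i) (w i)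

/-- A resolver for Eve in `⟦A⟧`: given the history (the finite run so far, as a list of
(state, letter) pairs), the current state and a letter of odd priority, it picks a successor. -/
def EveResolver (A : Layered Q α d) (σ : List (Q × α) → Q → α → Q) : Prop :=
  ∀ (h : List (Q × α)) (q : Q) (a : α), Odd (A.semPrio q a) → A.semStep q a (σ h q a)

/-- A resolver for Adam in `⟦A⟧` (resolving the even-priority steps). -/
def AdamResolver (A : Layered Q α d) (τ : List (Q × α) → Q → α → Q) : Prop :=
  ∀ (h : List (Q × α)) (q : Q) (a : α), Even (A.semPrio q a) → A.semStep q a (τ h q a)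

/-- A run is consistent with the Eve-resolver `σ`: every odd-priority step follows `σ`. -/
def ConsEve (A : Layered Q α d) (σ : List (Q × α) → Q → α → Q) (w : ℕ → α) (ρ : ℕ → Q) : Prop :=
  ∀ i : ℕ, Odd (A.semPrio (ρ i) (w i)) →
    ρ (i + 1) = σ (List.ofFn fun j : Fin i => (ρ (j : ℕ), w (j : ℕ))) (ρ i) (w i)

/-- A run is consistent with the Adam-resolver `τ`: every even-priority step follows `τ`. -/
def ConsAdam (A : Layered Q α d) (τ : List (Q × α) → Q → α → Q) (w : ℕ → α) (ρ : ℕ → Q) : Prop :=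
  ∀ i : ℕ, Even (A.semPrio (ρ i) (w i)) →
    ρ (i + 1) = τ (List.ofFn fun j : Fin i => (ρ (j : ℕ), w (j : ℕ))) (ρ i) (w i)

/-- Acceptance of `w` by `⟦A⟧` from the (leaf) state `p`: Eve has a winning strategy
in the game `G(⟦A⟧,w)`, i.e. a resolver all of whose consistent runs satisfy parity. -/
def SemAccept (A : Layered Q α d) (p : Q) (w : ℕ → α) : Prop :=
  ∃ σ : List (Q × α) → Q → α → Q, A.EveResolver σ ∧
    ∀ ρ : ℕ → Q, A.IsSemRun w p ρ → A.ConsEve σ w ρ → ParityAccept (A.runPrios w ρ)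

/-- Uniform semantic determinism: leaf states with the same layer-1 ancestor
recognise the same language in `⟦A⟧`. -/
def UnifSD (A : Layered Q α d) : Prop :=
  ∀ p q : Q, A.IsLeaf p → A.IsLeaf q → A.muHat 1 p = A.muHat 1 q →
    ∀ w : ℕ → α, (A.SemAccept p w ↔ A.SemAccept q w)

/-! #### Longest suffix resolvers -/

/-- `v` is a suffix-witness to `r`: the layer of `r` has a run labelled `v` ending in `r`. -/
def suffixReaches (A : Layered Q α d) (r : Q) (v : List α) : Prop :=
  ∃ p : Q, A.layer p = A.layer r ∧ A.runList p v = some r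

/-- The length of the longest suffix `v` of `u` such that the layer of `r` has a
run labelled `v` ending in `r`. -/
def longestSuffixLen (A : Layered Q α d) (u : List α) (r : Q) : ℕ :=
  Nat.findGreatest (fun k => k ≤ u.length ∧ A.suffixReaches r (u.drop (u.length - k))) u.length

/-- A longest suffix resolver for Eve, initialised to `u0`: a valid Eve-resolver that,
at a step of odd priority `x` after having read `v`, moves to an `a`-successor `q'`
maximising the length of the longest `(x+1)`-suffix of `u0·v·a` to `μ̂_{x+1} q'`. -/
def IsLongestSuffixResolverE (A : Layered Q α d) (u0 : List α)
    (σ : List (Q × α) → Q → α → Q) : Prop :=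
  A.EveResolver σ ∧
  ∀ (h : List (Q × α)) (q : Q) (a : α), Odd (A.semPrio q a) →
    ∀ q' : Q, A.semStep q a q' →
      A.longestSuffixLen (u0 ++ h.map Prod.snd ++ [a]) (A.muHat (A.semPrio q a + 1) q') ≤
      A.longestSuffixLen (u0 ++ h.map Prod.snd ++ [a]) (A.muHat (A.semPrio q a + 1) (σ h q a))

/-- A longest suffix resolver for Adam, initialised to `u0` (symmetric, for even priorities). -/
def IsLongestSuffixResolverA (A : Layered Q α d) (u0 : List α)
    (τ : List (Q × α) → Q → α → Q) : Prop :=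
  A.AdamResolver τ ∧
  ∀ (h : List (Q × α)) (q : Q) (a : α), Even (A.semPrio q a) →
    ∀ q' : Q, A.semStep q a q' →
      A.longestSuffixLen (u0 ++ h.map Prod.snd ++ [a]) (A.muHat (A.semPrio q a + 1) q') ≤
      A.longestSuffixLen (u0 ++ h.map Prod.snd ++ [a]) (A.muHat (A.semPrio q a + 1) (τ h q a))

/-! #### The random walk on `⟦A⟧` -/

/-- The uniform step probability of the random walk of `⟦A⟧`. -/
def stepProb (A : Layered Q α d) (q : Q) (a : α) (q' : Q) : ENNReal :=
  if A.semStep q a q' then ((Nat.card {p : Q // A.semStep q a p} : ENNReal))⁻¹ else 0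

/-- `m` is the Markov measure of the random walk of `⟦A⟧` over the word `w` started at `p`:
a probability measure on `ℕ → Q` whose cylinder probabilities are the products of the
uniform step probabilities. -/
def IsWalkMeasure [MeasurableSpace Q] (A : Layered Q α d) (w : ℕ → α) (p : Q)
    (m : MeasureTheory.Measure (ℕ → Q)) : Prop :=
  MeasureTheory.IsProbabilityMeasure m ∧
  ∀ (n : ℕ) (s : Fin (n + 1) → Q),
    m {ρ : ℕ → Q | ∀ i : Fin (n + 1), ρ (i : ℕ) = s i} =
      (if s 0 = p then 1 else 0) *
        ∏ i : Fin n, A.stepProb (s i.castSucc) (w (i : ℕ)) (s i.succ)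

/-! #### Normal form, centrality, safe minimality, central sequences -/

/-- Normal form: (N1) every layer `x ≥ 2` is a union of non-trivial SCCs, and
(N2) the safe language of every child is strictly smaller than that of its parent. -/
def NormalForm (A : Layered Q α d) : Prop :=
  ∀ q : Q, 2 ≤ A.layer q →
    (∀ (u : List α) (q' : Q), A.runList q u = some q' →
      ∃ v : List α, v ≠ [] ∧ A.runList q' v = some q) ∧
    (∀ p : Q, 1 < A.layer p → A.μ p = q →
      ∃ u : List α, (A.runList q u).isSome = true ∧ A.runList p u = none)

/-- Inclusion of `x`-safe languages. -/
def SafeLE (A : Layered Q α d) (x : ℕ) (p q : Q) : Prop :=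
  (∀ u : List α, A.SafeFin x p u → A.SafeFin x q u) ∧
  (∀ w : ℕ → α, A.SafeInf x p w → A.SafeInf x q w)

/-- Centralised: siblings (same parent) whose safe languages are included,
lie in the same SCC of their layer. -/
def Centralised (A : Layered Q α d) : Prop :=
  ∀ p q : Q, 2 ≤ A.layer p → A.layer q = A.layer p →
    A.muHat (A.layer p - 1) p = A.muHat (A.layer p - 1) q →
    A.SafeLE (A.layer p) p q →
    (∃ u : List α, A.runList p u = some q) ∧ (∃ v : List α, A.runList q v = some p)

/-- `L(p) = L(q)`: all leaves above (the layer-1 ancestor of) `p` and all leaves above `q`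
recognise the same language in `⟦A⟧`. -/
def LangEq1 (A : Layered Q α d) (p q : Q) : Prop :=
  ∀ l l' : Q, A.IsLeaf l → A.IsLeaf l' → A.muHat 1 l = A.muHat 1 p →
    A.muHat 1 l' = A.muHat 1 q → ∀ w : ℕ → α, (A.SemAccept l w ↔ A.SemAccept l' w)

/-- The equivalence `p ≈_x q`: language equivalence together with equality of all
`y`-safe languages for `2 ≤ y ≤ x`. -/
def ApproxEq (A : Layered Q α d) (x : ℕ) (p q : Q) : Prop :=
  A.LangEq1 p q ∧ ∀ y : ℕ, 2 ≤ y → y ≤ x →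
    ((∀ u : List α, A.SafeFin y p u ↔ A.SafeFin y q u) ∧
     (∀ w : ℕ → α, A.SafeInf y p w ↔ A.SafeInf y q w))

/-- Safe minimality: `≈_x`-equivalent states of the same layer are equal. -/
def SafeMinimal (A : Layered Q α d) : Prop :=
  ∀ p q : Q, A.layer p = A.layer q → A.ApproxEq (A.layer p) p q → p = q

/-- `z` is a central sequence for the state `p` (of layer `x = layer p`). -/
def IsCentralSeq (A : Layered Q α d) (p : Q) (z : List α) : Prop :=
  z ≠ [] ∧ A.runList p z = some p ∧
  (∀ q : Q, A.layer q = A.layer p →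
    A.muHat (A.layer p - 1) q = A.muHat (A.layer p - 1) p →
    (A.runList q z = some p ∨ A.runList q z = none)) ∧
  (∀ q' : Q, A.layer q' = A.layer p + 1 →
    A.muHat (A.layer p - 1) q' = A.muHat (A.layer p - 1) p →
    A.runList q' z = none)

end Layered

/-! ### Morphisms of layered automata -/

/-- A morphism of layered automata. -/
structure IsLayMorphism {Q R α : Type} {d d' : ℕ} (A : Layered Q α d) (B : Layered R α d')
    (φ : Q → R) : Prop where
  map_init : φ A.init = B.init
  map_step : ∀ q a q', A.δ q a = some q' → B.δ (φ q) a = some (φ q')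
  map_anc : ∀ p q, A.IsAncestor p q → B.IsAncestor (φ p) (φ q)

/-- A strong morphism of layered automata additionally preserves non-transitions. -/
def IsStrongLayMorphism {Q R α : Type} {d d' : ℕ} (A : Layered Q α d) (B : Layered R α d')
    (φ : Q → R) : Prop :=
  IsLayMorphism A B φ ∧ ∀ q a, A.δ q a = none → B.δ (φ q) a = none

/-- An isomorphism of layered automata: a bijection on states that restricts to
isomorphisms of the layer transition systems, preserves the initial state, and
commutes with the morphisms `μ`. -/
structure IsLayIso {Q R α : Type} {d d' : ℕ} (A : Layered Q α d) (B : Layered R α d')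
    (φ : Q ≃ R) : Prop where
  map_layer : ∀ q, B.layer (φ q) = A.layer q
  map_init : φ A.init = B.init
  map_mu : ∀ q, φ (A.μ q) = B.μ (φ q)
  map_step : ∀ q a, (A.δ q a).map φ = B.δ (φ q) a

/-- `L(⟦A⟧) = L(⟦B⟧)`: the semantics automata (with any choice of initial leaf states
above the respective initial states) accept the same infinite words. -/
def SemLangEq {Q R α : Type} {d d' : ℕ} (A : Layered Q α d) (B : Layered R α d') : Prop :=
  ∀ (p : Q) (q : R), A.IsLeaf p → A.muHat 1 p = A.init → B.IsLeaf q → B.muHat 1 q = B.init →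
    ∀ w : ℕ → α, (A.SemAccept p w ↔ B.SemAccept q w)

/-! ### Deterministic parity automata -/

/-- A deterministic parity automaton over `α` with priorities in `[1,d]`. -/
structure DPA (Q α : Type) (d : ℕ) where
  init : Q
  next : Q → α → Q
  prio : Q → α → ℕ
  prio_pos : ∀ q a, 1 ≤ prio q a
  prio_le : ∀ q a, prio q a ≤ d

namespace DPA

variable {Q α : Type} {d : ℕ}

/-- The unique run of a DPA on an infinite word. -/
def run (B : DPA Q α d) (w : ℕ → α) : ℕ → Q
  | 0 => B.init
  | n + 1 => B.next (run B w n) (w n)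

/-- Acceptance by a DPA: the priorities along the unique run satisfy parity. -/
def Accepts (B : DPA Q α d) (w : ℕ → α) : Prop :=
  ParityAccept (fun i => B.prio (B.run w i) (w i))

end DPA

/-- `L` is ω-regular: recognised by some deterministic parity automaton. -/
def IsOmegaRegular {α : Type} (L : Set (ℕ → α)) : Prop :=
  ∃ (n d : ℕ) (B : DPA (Fin n) α d), ∀ w : ℕ → α, w ∈ L ↔ B.Accepts w

/-! ### Nondeterministic coBüchi automata -/

/-- A (complete) nondeterministic coBüchi automaton: transitions carry priorities in `{1,2}`. -/
structure NCA (Q α : Type) where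
  init : Q
  trans : Q → α → ℕ → Q → Prop
  prio_mem : ∀ q a x q', trans q a x q' → x = 1 ∨ x = 2
  complete : ∀ q a, ∃ x q', trans q a x q'

namespace NCA

variable {Q α : Type}

/-- Nondeterministic acceptance from the state `q`. -/
def AcceptFrom (B : NCA Q α) (q : Q) (w : ℕ → α) : Prop :=
  ∃ (ρ : ℕ → Q) (pri : ℕ → ℕ), ρ 0 = q ∧
    (∀ i : ℕ, B.trans (ρ i) (w i) (pri i) (ρ (i + 1))) ∧ ParityAccept pri

/-- Semantic determinism: every `a`-successor of `p` recognises `a⁻¹ L(p)`. -/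
def SemDet (B : NCA Q α) : Prop :=
  ∀ p a x q, B.trans p a x q →
    ∀ w : ℕ → α, (B.AcceptFrom q w ↔ B.AcceptFrom p (prependW [a] w))

/-- Safe determinism: all `a`-transitions from a state carry the same priority, and
there is at most one `a`-transition of priority `2` from each state. -/
def SafeDet (B : NCA Q α) : Prop :=
  (∀ q a x q' x' q'', B.trans q a x q' → B.trans q a x' q'' → x = x') ∧
  (∀ q a q' q'', B.trans q a 2 q' → B.trans q a 2 q'' → q' = q'')

/-- 1-saturation: priority-1 transitions go to all language-equivalent states. -/
def OneSaturated (B : NCA Q α) : Prop :=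
  ∀ q a p p', B.trans q a 1 p →
    (∀ w : ℕ → α, (B.AcceptFrom p' w ↔ B.AcceptFrom p w)) → B.trans q a 1 p'

end NCA

/-! ### Simple-by-priorities alternating parity automata (abstract) -/

/-- A simple-by-priorities alternating parity automaton: a complete transition system
over `α × [1,d]` in which all `a`-transitions from a state carry the same priority. -/
structure SPA (Q α : Type) (d : ℕ) where
  init : Q
  step : Q → α → Q → Prop
  prio : Q → α → ℕ
  prio_pos : ∀ q a, 1 ≤ prio q a
  prio_le : ∀ q a, prio q a ≤ d
  complete : ∀ q a, ∃ q', step q a q'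

/-! ### The congruence on tuples of finite words -/

/-- The data of the congruence at one level (tuples of a fixed length,
represented as reversed lists of components: the head is the last component). -/
structure CongrLevel (α : Type) where
  bot : List (List α) → Prop
  eq : List (List α) → List (List α) → Prop
  ptd : List (List α) → Prop

/-- Concatenate a finite word to the last component of a tuple
(tuples are represented as reversed lists: the head is the last component). -/
def tcat {α : Type} (t : List (List α)) (v : List α) : List (List α) :=
  match t with
  | h :: rest => (h ++ v) :: rest
  | [] => []

/-- Merge the last two components of a tuple. -/
def tmerge {α : Type} (t : List (List α)) : List (List α) :=
  match t with
  | u' :: h :: rest => (h ++ u') :: rest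
  | t' => t'

/-- The congruence data at level `n` (handling tuples of length `n+1`), defined by
recursion on the level, following the inductive definition of `≈ ⊥`, `≈` and `pointed`. -/
def congrData {α : Type} [Inhabited α] (L : Set (ℕ → α)) : ℕ → CongrLevel α
  | 0 =>
    { bot := fun _ => False
      eq := fun t s =>
        match t, s with
        | [u], [v] => ∀ w : ℕ → α, (prependW u w ∈ L ↔ prependW v w ∈ L)
        | _, _ => False
      ptd := fun _ => True }
  | n + 1 =>
    let C := congrData L n
    let bot : List (List α) → Prop := fun t =>
      match t with
      | u' :: ubar =>
        C.bot (tmerge (u' :: ubar)) ∨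
        ∀ w : List α, w ≠ [] → C.eq (tcat (tmerge (u' :: ubar)) w) ubar →
          ((prependW ubar.reverse.flatten (perWord (u' ++ w)) ∈ L) ↔ Even (n + 1))
      | [] => True
    let eq : List (List α) → List (List α) → Prop := fun t s =>
      C.eq (tmerge t) (tmerge s) ∧ ∀ v : List α, (bot (tcat t v) ↔ bot (tcat s v))
    let ptd : List (List α) → Prop := fun t =>
      match t with
      | u' :: ubar =>
        ¬ bot (u' :: ubar) ∧ C.ptd ubar ∧
        ∀ (vbar : List (List α)) (v' : List α), vbar.length = n + 1 → C.ptd vbar →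
          C.eq (tcat vbar v') ubar → ¬ bot ((v' ++ u') :: vbar) →
          eq ((v' ++ u') :: vbar) (u' :: ubar)
      | [] => False
    { bot := bot, eq := eq, ptd := ptd }

/-- `t ≈ ⊥` (for a nonempty tuple `t`, in reversed representation). -/
def TupBot {α : Type} [Inhabited α] (L : Set (ℕ → α)) (t : List (List α)) : Prop :=
  (congrData L (t.length - 1)).bot t

/-- `t ≈ s` (for nonempty tuples of the same length, in reversed representation). -/
def TupEq {α : Type} [Inhabited α] (L : Set (ℕ → α)) (t s : List (List α)) : Prop :=
  t.length = s.length ∧ (congrData L (t.length - 1)).eq t s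

/-- `t` is pointed. -/
def TupPointed {α : Type} [Inhabited α] (L : Set (ℕ → α)) (t : List (List α)) : Prop :=
  (congrData L (t.length - 1)).ptd t

/-- `cls` exhibits `A` as (a copy of) the congruence automaton `A_≈` of `L`: its states
are the `≈`-classes of pointed tuples (the layer being the tuple length), transitions
are given by concatenation in the last component, the initial state is the class of
`(ε)`, and the morphisms are given by merging the last two components. -/
structure IsCongrAut {α : Type} [Inhabited α] (L : Set (ℕ → α)) {Q : Type} {d : ℕ}
    (A : Layered Q α d) (cls : (t : List (List α)) → TupPointed L t → Q) : Prop where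
  surj : ∀ q : Q, ∃ (t : List (List α)) (ht : TupPointed L t), cls t ht = q
  cls_eq : ∀ t ht s hs, cls t ht = cls s hs ↔ TupEq L t s
  layer_eq : ∀ t ht, A.layer (cls t ht) = t.length
  init_eq : ∀ h : TupPointed L [([] : List α)], cls [([] : List α)] h = A.init
  step_some : ∀ t ht (a : α) (h' : TupPointed L (tcat t [a])),
    A.δ (cls t ht) a = some (cls (tcat t [a]) h')
  step_none : ∀ t ht (a : α), TupBot L (tcat t [a]) → A.δ (cls t ht) a = none
  mu_eq : ∀ (u' : List α) (ubar : List (List α)) (h : TupPointed L (u' :: ubar))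
    (h' : TupPointed L (tmerge (u' :: ubar))), ubar ≠ [] →
    A.μ (cls (u' :: ubar) h) = cls (tmerge (u' :: ubar)) h'

end

/-! Started at `p`, the random walk can only take transitions projecting to the layer-`x`
transitions of the given run `ρ₀`, so it agrees with `ρ₀` at layer `x` forever and never sees a
priority below `x`. After `|u|` steps, agreement with `ρ₀` at layer `x + 1` persists as well and
forces priorities `≥ x + 1`; and at every step of priority `x` the walk may take `ρ₀`'s own
transition, which it does with probability at least `1 / |Q|`, after which it agrees at layer
`x + 1`. So more than `k` steps of priority `x` occur with probability at most `(1 - 1/|Q|)^k`,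
a bound obtained from a supermartingale potential on finite path prefixes. -/

open MeasureTheory Filter
open scoped ENNReal

theorem ENNReal.sum_mul_le_one_sub_mul {ι : Type*} [Fintype ι] [DecidableEq ι]
    {κ f : ι → ℝ≥0∞} {i₀ : ι} {ε a : ℝ≥0∞} (hκ : ∑ i, κ i ≤ 1) (hε : ε ≤ κ i₀)
    (hf₀ : f i₀ = 0) (hf : ∀ i, f i ≤ a) :
    ∑ i, κ i * f i ≤ (1 - ε) * a := by
  have hκ₀ : κ i₀ ≠ ∞ :=
    ne_top_of_le_ne_top one_ne_top ((Finset.single_le_sum (by simp) (Finset.mem_univ i₀)).trans hκ)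
  have hrest : ∑ i ∈ Finset.univ.erase i₀, κ i ≤ 1 - ε := by
    refine (ENNReal.le_sub_of_add_le_right hκ₀ ?_).trans (tsub_le_tsub_left hε 1)
    rwa [Finset.sum_erase_add _ _ (Finset.mem_univ i₀)]
  calc ∑ i, κ i * f i = ∑ i ∈ Finset.univ.erase i₀, κ i * f i := by
        rw [← Finset.sum_erase_add _ _ (Finset.mem_univ i₀), hf₀, mul_zero, add_zero]
    _ ≤ ∑ i ∈ Finset.univ.erase i₀, κ i * a := by gcongr with i; exact hf i
    _ = (∑ i ∈ Finset.univ.erase i₀, κ i) * a := (Finset.sum_mul ..).symm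
    _ ≤ (1 - ε) * a := by gcongr

noncomputable section PathWeight

variable {Q : Type}

def pathWeight (κ : ℕ → Q → Q → ℝ≥0∞) (p : Q) (n : ℕ) (s : Fin (n + 1) → Q) : ℝ≥0∞ :=
  (if s 0 = p then 1 else 0) * ∏ i : Fin n, κ i (s i.castSucc) (s i.succ)

variable {κ : ℕ → Q → Q → ℝ≥0∞} {p : Q}

lemma pathWeight_zero (s : Fin 1 → Q) : pathWeight κ p 0 s = if s 0 = p then 1 else 0 := by
  simp [pathWeight]

lemma pathWeight_snoc {n : ℕ} (s : Fin (n + 1) → Q) (q : Q) :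
    pathWeight κ p (n + 1) (Fin.snoc s q) = pathWeight κ p n s * κ n (s (Fin.last n)) q := by
  simp only [pathWeight, Fin.prod_univ_castSucc, Fin.succ_castSucc, Fin.snoc_castSucc,
    Fin.succ_last, Fin.snoc_last, Fin.val_castSucc, Fin.val_last]
  rw [show (0 : Fin (n + 2)) = Fin.castSucc 0 from rfl, Fin.snoc_castSucc, mul_assoc]

lemma sum_fun_fin_succ_eq_sum_snoc [Fintype Q] {M : Type*} [AddCommMonoid M] {n : ℕ}
    (f : (Fin (n + 1) → Q) → M) : ∑ t, f t = ∑ s : Fin n → Q, ∑ q, f (Fin.snoc s q) := by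
  rw [← (Fin.snocEquiv fun _ => Q).sum_comp, Fintype.sum_prod_type_right]
  rfl

lemma invariant_of_pathWeight_ne_zero (I : ℕ → Q → Prop) (h₀ : I 0 p)
    (hstep : ∀ n q q', I n q → κ n q q' ≠ 0 → I (n + 1) q') :
    ∀ (n : ℕ) (s : Fin (n + 1) → Q), pathWeight κ p n s ≠ 0 → I n (s (Fin.last n)) := by
  intro n
  induction n with
  | zero =>
    intro s hs
    rw [pathWeight_zero] at hs
    have : s 0 = p := by by_contra h; simp [h] at hs
    exact this ▸ h₀
  | succ n ih =>
    intro s hs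
    obtain ⟨t, q, rfl⟩ : ∃ t q, s = Fin.snoc t q :=
      ⟨Fin.init s, s (Fin.last _), (Fin.snoc_init_self s).symm⟩
    rw [pathWeight_snoc] at hs
    rw [Fin.snoc_last]
    exact hstep n _ _ (ih _ (left_ne_zero_of_mul hs)) (right_ne_zero_of_mul hs)

lemma sum_pathWeight_mul_le [Fintype Q] (Φ : (n : ℕ) → (Fin (n + 1) → Q) → ℝ≥0∞)
    (hΦ : ∀ n s, pathWeight κ p n s ≠ 0 →
      ∑ q, κ n (s (Fin.last n)) q * Φ (n + 1) (Fin.snoc s q) ≤ Φ n s) :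
    ∀ n, ∑ s, pathWeight κ p n s * Φ n s ≤ Φ 0 (fun _ => p) := by
  intro n
  induction n with
  | zero =>
    rw [Fintype.sum_eq_single (fun _ => p)]
    · simp [pathWeight_zero]
    · intro s hs
      have : s 0 ≠ p := fun h => hs (funext fun i => Fin.fin_one_eq_zero i ▸ h)
      simp [pathWeight_zero, this]
  | succ n ih =>
    refine le_trans ?_ ih
    rw [sum_fun_fin_succ_eq_sum_snoc]
    gcongr with s
    simp_rw [pathWeight_snoc, mul_assoc, ← Finset.mul_sum]
    by_cases hs : pathWeight κ p n s = 0
    · simp [hs]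
    · exact mul_le_mul_right (hΦ n s hs) _

end PathWeight

noncomputable section PrefixCount

variable {Q : Type}

-- The last position `n` of `s` is not counted.
def prefixCount (P : ℕ → Q → Prop) [∀ i q, Decidable (P i q)] (n : ℕ) (s : Fin (n + 1) → Q) :
    ℕ :=
  ∑ i : Fin n, if P i (s i.castSucc) then 1 else 0

variable {P : ℕ → Q → Prop} [∀ i q, Decidable (P i q)]

lemma prefixCount_snoc {n : ℕ} (s : Fin (n + 1) → Q) (q : Q) :
    prefixCount P (n + 1) (Fin.snoc s q) =
      prefixCount P n s + if P n (s (Fin.last n)) then 1 else 0 := by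
  rw [prefixCount, prefixCount, Fin.sum_univ_castSucc]
  simp only [Fin.snoc_castSucc, Fin.val_castSucc, Fin.val_last]

lemma prefixCount_eq_count (ρ : ℕ → Q) (n : ℕ) :
    prefixCount P n (fun i => ρ i) = Nat.count (fun i => P i (ρ i)) n := by
  rw [Nat.count_eq_card_filter_range, Finset.card_filter]
  exact Fin.sum_univ_eq_sum_range (fun i => if P i (ρ i) then 1 else 0) n

end PrefixCount

section Cylinder

variable {Q : Type} [MeasurableSpace Q]

-- The cylinders need not be measurable: this only uses monotonicity and continuity from below,
-- which hold for arbitrary sets.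
lemma measure_exists_prefix_le [Fintype Q] {m : Measure (ℕ → Q)}
    {P : (n : ℕ) → (Fin (n + 1) → Q) → ℝ≥0∞}
    (hm : ∀ n s, m {ρ | ∀ i : Fin (n + 1), ρ i = s i} ≤ P n s)
    (E : (n : ℕ) → (Fin (n + 1) → Q) → Prop)
    (hE : ∀ (ρ : ℕ → Q) n, E n (fun i => ρ i) → E (n + 1) (fun i => ρ i))
    {c : ℝ≥0∞} (hc : ∀ n, ∑ s with E n s, P n s ≤ c) :
    m {ρ | ∃ n, E n (fun i => ρ i)} ≤ c := by
  have hmono : Monotone fun n => {ρ : ℕ → Q | E n (fun i => ρ i)} :=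
    monotone_nat_of_le_succ fun n ρ => hE ρ n
  rw [Set.ofPred_exists, hmono.measure_iUnion]
  refine iSup_le fun n => le_trans (measure_mono ?_) ((measure_biUnion_finset_le _ _).trans
    ((Finset.sum_le_sum fun s _ => hm n s).trans (hc n)))
  intro ρ hρ
  simp only [Set.mem_iUnion, Set.mem_ofPred_eq, Finset.mem_filter, Finset.mem_univ, true_and]
  exact ⟨fun i => ρ i, hρ, fun _ => rfl⟩

end Cylinder

lemma prob_eq_one_of_compl_subset_null {Ω : Type*} [MeasurableSpace Ω] {μ : Measure Ω}
    [IsProbabilityMeasure μ] {s t : Set Ω} (hst : sᶜ ⊆ t) (ht : μ t = 0) : μ s = 1 :=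
  have h := measure_mono_null hst ht
  (prob_compl_eq_zero_iff₀ (NullMeasurableSet.of_null h).of_compl).mp h

namespace Layered

variable {Q α : Type} {d : ℕ} (A : Layered Q α d)

lemma layer_iterate_μ (q : Q) {k : ℕ} (hk : k < A.layer q) :
    A.layer (A.μ^[k] q) = A.layer q - k := by
  induction k with
  | zero => simp
  | succ k ih =>
    have h := A.μ_layer (A.μ^[k] q) (by rw [ih (by omega)]; omega)
    rw [Function.iterate_succ_apply']
    rw [ih (by omega)] at h
    omega

lemma layer_muHat {y : ℕ} (q : Q) (hy : 1 ≤ y) (hyq : y ≤ A.layer q) :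
    A.layer (A.muHat y q) = y := by
  rcases hyq.eq_or_lt with h | h
  · simp [muHat, h]
  · rw [muHat, A.layer_iterate_μ q (by omega)]
    omega

lemma iterate_μ_muHat {y z : ℕ} (q : Q) (hyz : y ≤ z) (hz : z ≤ A.layer q) :
    A.μ^[z - y] (A.muHat z q) = A.muHat y q := by
  rw [muHat, muHat, ← Function.iterate_add_apply]
  congr 1
  omega

lemma muHat_of_layer_le {y : ℕ} {q : Q} (h : A.layer q ≤ y) : A.muHat y q = q := by
  simp [muHat, Nat.sub_eq_zero_of_le h]

lemma δ_iterate_μ {q q' : Q} {a : α} (h : A.δ q a = some q') {k : ℕ} (hk : k < A.layer q) :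
    A.δ (A.μ^[k] q) a = some (A.μ^[k] q') := by
  induction k with
  | zero => simpa
  | succ k ih =>
    rw [Function.iterate_succ_apply', Function.iterate_succ_apply']
    exact A.μ_morph _ _ _ (by rw [A.layer_iterate_μ q (by omega)]; omega) (ih (by omega))

lemma layerOf_le_layer (q : Q) (a : α) : A.layerOf q a ≤ A.layer q :=
  Nat.findGreatest_le _

lemma le_layerOf {q : Q} {a : α} {y : ℕ} (hy : y ≤ A.layer q)
    (h : (A.δ (A.muHat y q) a).isSome) : y ≤ A.layerOf q a :=
  Nat.le_findGreatest hy h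

lemma semStep.δ_muHat {q q' : Q} {a : α} (h : A.semStep q a q') {y : ℕ} (hy : 1 ≤ y)
    (hyz : y ≤ A.semPrio q a) :
    A.semPrio q a ≤ A.layer q' ∧ A.δ (A.muHat y q) a = some (A.muHat y q') := by
  change y ≤ A.layerOf q a at hyz
  change A.layerOf q a ≤ _ ∧ _
  set z := A.layerOf q a
  have hzq : z ≤ A.layer q := A.layerOf_le_layer q a
  have hlz : A.layer (A.muHat z q') = z := by
    rw [A.δ_layer _ _ _ h.2, A.layer_muHat q (by omega) hzq]
  have hzq' : z ≤ A.layer q' := by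
    by_contra hlt
    rw [A.muHat_of_layer_le (by omega)] at hlz
    omega
  refine ⟨hzq', ?_⟩
  have := A.δ_iterate_μ h.2 (k := z - y) (by rw [A.layer_muHat q (by omega) hzq]; omega)
  rwa [A.iterate_μ_muHat q hyz hzq, A.iterate_μ_muHat q' hyz hzq'] at this

def AgreesAt (y : ℕ) (q r : Q) : Prop :=
  y ≤ A.layer q ∧ A.muHat y q = A.muHat y r

variable {A}

lemma AgreesAt.le_semPrio {y : ℕ} {q r r' : Q} {a : α} (hqr : A.AgreesAt y q r) (hy : 1 ≤ y)
    (hr : A.semStep r a r') (hyr : y ≤ A.semPrio r a) : y ≤ A.semPrio q a :=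
  A.le_layerOf hqr.1 (by rw [hqr.2, (hr.δ_muHat A hy hyr).2]; rfl)

lemma AgreesAt.semStep {y : ℕ} {q q' r r' : Q} {a : α} (hqr : A.AgreesAt y q r) (hy : 1 ≤ y)
    (hr : A.semStep r a r') (hyr : y ≤ A.semPrio r a) (hq : A.semStep q a q') :
    A.AgreesAt y q' r' := by
  have hyq := hqr.le_semPrio hy hr hyr
  obtain ⟨hlay, hδ⟩ := hq.δ_muHat A hy hyq
  refine ⟨hyq.trans hlay, Option.some_injective _ ?_⟩
  rw [← hδ, hqr.2, (hr.δ_muHat A hy hyr).2]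

lemma AgreesAt.semStep_of_semPrio_le {y : ℕ} {q r r' : Q} {a : α} (hqr : A.AgreesAt y q r)
    (hy : 1 ≤ y) (hr : A.semStep r a r') (hyr : y ≤ A.semPrio r a) (hqy : A.semPrio q a ≤ y) :
    A.semStep q a r' := by
  have hq : A.layerOf q a = y := le_antisymm hqy (hqr.le_semPrio hy hr hyr)
  refine ⟨hr.1, ?_⟩
  rw [hq, hqr.2, (hr.δ_muHat A hy hyr).2]

lemma stepProb_eq_zero_of_not_semStep {q q' : Q} {a : α} (h : ¬ A.semStep q a q') :
    A.stepProb q a q' = 0 := by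
  simp [stepProb, h]

lemma sum_stepProb_le_one [Fintype Q] (q : Q) (a : α) : ∑ q', A.stepProb q a q' ≤ 1 := by
  rcases isEmpty_or_nonempty {q' // A.semStep q a q'} with h | h
  · have : ∀ q', ¬ A.semStep q a q' := fun q' hq' => h.false ⟨q', hq'⟩
    simp [stepProb, this]
  · have hcard : (Nat.card {q' // A.semStep q a q'} : ℝ≥0∞) ≠ 0 := by simp
    simp only [stepProb]
    rw [← Finset.sum_filter, Finset.sum_const, nsmul_eq_mul, Nat.card_eq_fintype_card,
      Fintype.card_subtype]
    rw [Nat.card_eq_fintype_card, Fintype.card_subtype] at hcard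
    exact (ENNReal.mul_inv_cancel hcard (ENNReal.natCast_ne_top _)).le

lemma inv_card_le_stepProb [Fintype Q] {q q' : Q} {a : α} (h : A.semStep q a q') :
    (Fintype.card Q : ℝ≥0∞)⁻¹ ≤ A.stepProb q a q' := by
  rw [stepProb, if_pos h, Nat.card_eq_fintype_card]
  exact ENNReal.inv_le_inv.mpr (by exact_mod_cast Fintype.card_subtype_le _)

end Layered

noncomputable section RandomWalk

open Layered

variable {Q α : Type} [Fintype Q] {d : ℕ}

/-- Bounds the probability that a step of priority `x` does not rejoin the reference run. -/
def missProb (Q : Type) [Fintype Q] : ℝ≥0∞ := 1 - (Fintype.card Q : ℝ≥0∞)⁻¹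

/-- After `c` low steps, `missProb Q ^ (k - c)` bounds the probability of more than `k` of them
in total; the bound drops to `0` once the walk agrees with `ρ₀` at layer `x + 1`. -/
def lowPotential (A : Layered Q α d) (ρ₀ : ℕ → Q) (x L k n c : ℕ) (q : Q) : ℝ≥0∞ :=
  if c ≤ k ∧ L ≤ n ∧ A.AgreesAt (x + 1) q (ρ₀ n) then 0 else missProb Q ^ (k - c)

variable {A : Layered Q α d} {w : ℕ → α} {ρ₀ : ℕ → Q} {x L : ℕ}

lemma lowPotential_le (k n c : ℕ) (q : Q) :
    lowPotential A ρ₀ x L k n c q ≤ missProb Q ^ (k - c) := by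
  unfold lowPotential
  split_ifs <;> simp

lemma sum_stepProb_mul_lowPotential_le (hx : 1 ≤ x) {k n c : ℕ} {q : Q}
    (hq : A.AgreesAt x q (ρ₀ n)) (hρ₀ : A.semStep (ρ₀ n) (w n) (ρ₀ (n + 1)))
    (hge : x ≤ A.semPrio (ρ₀ n) (w n)) (hgt : L ≤ n → x + 1 ≤ A.semPrio (ρ₀ n) (w n)) :
    ∑ q', A.stepProb q (w n) q' *
        lowPotential A ρ₀ x L k (n + 1) (c + if L ≤ n ∧ A.semPrio q (w n) ≤ x then 1 else 0) q'
      ≤ lowPotential A ρ₀ x L k n c q := by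
  by_cases hgood : c ≤ k ∧ L ≤ n ∧ A.AgreesAt (x + 1) q (ρ₀ n)
  · obtain ⟨hck, hLn, hq₁⟩ := hgood
    have hhigh := hq₁.le_semPrio (by omega) hρ₀ (hgt hLn)
    rw [if_neg (by omega), add_zero, lowPotential, if_pos ⟨hck, hLn, hq₁⟩]
    refine le_of_eq (Finset.sum_eq_zero fun q' _ => ?_)
    by_cases hq' : A.semStep q (w n) q'
    · rw [lowPotential, if_pos ⟨hck, by omega, hq₁.semStep (by omega) hρ₀ (hgt hLn) hq'⟩,
        mul_zero]
    · rw [stepProb_eq_zero_of_not_semStep hq', zero_mul]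
  rw [lowPotential, if_neg hgood]
  by_cases hlow : L ≤ n ∧ A.semPrio q (w n) ≤ x ∧ c < k
  · obtain ⟨hLn, hqx, hck⟩ := hlow
    have hback := hq.semStep_of_semPrio_le hx hρ₀ hge hqx
    have hgood' : A.AgreesAt (x + 1) (ρ₀ (n + 1)) (ρ₀ (n + 1)) :=
      ⟨(hgt hLn).trans ((hρ₀.δ_muHat A (by omega) (hgt hLn)).1), rfl⟩
    rw [if_pos ⟨hLn, hqx⟩]
    calc _ ≤ missProb Q * missProb Q ^ (k - (c + 1)) :=
          ENNReal.sum_mul_le_one_sub_mul (A.sum_stepProb_le_one q (w n))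
            (inv_card_le_stepProb hback)
            (by rw [lowPotential, if_pos ⟨by omega, by omega, hgood'⟩])
            (fun q' => lowPotential_le k (n + 1) (c + 1) q')
      _ = missProb Q ^ (k - c) := by rw [← pow_succ']; congr 1; omega
  · have hexp : k - (c + if L ≤ n ∧ A.semPrio q (w n) ≤ x then 1 else 0) = k - c := by
      split_ifs <;> omega
    calc _ ≤ ∑ q', A.stepProb q (w n) q' * missProb Q ^ (k - c) := by
          gcongr with q'
          exact hexp ▸ lowPotential_le _ _ _ q'
      _ ≤ missProb Q ^ (k - c) := by
          rw [← Finset.sum_mul]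
          exact mul_le_of_le_one_left' (A.sum_stepProb_le_one q (w n))

variable [MeasurableSpace Q] {p : Q} {m : Measure (ℕ → Q)}

lemma measure_exists_lt_prefixCount_le (hx : 1 ≤ x) (hrun : A.IsSemRun w p ρ₀)
    (hge : ∀ n, x ≤ A.semPrio (ρ₀ n) (w n)) (hgt : ∀ n, L ≤ n → x + 1 ≤ A.semPrio (ρ₀ n) (w n))
    (hm : A.IsWalkMeasure w p m) (k : ℕ) :
    m {ρ | ∃ n, k < prefixCount (fun i q => L ≤ i ∧ A.semPrio q (w i) ≤ x) n (fun i => ρ i)}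
      ≤ missProb Q ^ k := by
  let low : ℕ → Q → Prop := fun i q => L ≤ i ∧ A.semPrio q (w i) ≤ x
  let κ : ℕ → Q → Q → ℝ≥0∞ := fun i q q' => A.stepProb q (w i) q'
  have hagree : ∀ n (s : Fin (n + 1) → Q), pathWeight κ p n s ≠ 0 →
      A.AgreesAt x (s (Fin.last n)) (ρ₀ n) := by
    refine invariant_of_pathWeight_ne_zero (fun n q => A.AgreesAt x q (ρ₀ n)) ?_
      fun n q q' hq hκ => ?_
    · exact ⟨hrun.1 ▸ (hge 0).trans (A.layerOf_le_layer _ _), by rw [hrun.1]⟩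
    · by_contra hq'
      exact hκ (stepProb_eq_zero_of_not_semStep
        fun hs => hq' (hq.semStep hx (hrun.2 n) (hge n) hs))
  let Φ : (n : ℕ) → (Fin (n + 1) → Q) → ℝ≥0∞ := fun n s =>
    lowPotential A ρ₀ x L k n (prefixCount low n s) (s (Fin.last n))
  have hΦ : ∀ n, ∑ s, pathWeight κ p n s * Φ n s ≤ Φ 0 (fun _ => p) :=
    sum_pathWeight_mul_le Φ fun n s hs => by
      simp only [Φ, κ, prefixCount_snoc, Fin.snoc_last]
      exact sum_stepProb_mul_lowPotential_le hx (hagree n s hs) (hrun.2 n) (hge n) (hgt n)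
  refine measure_exists_prefix_le (P := pathWeight κ p) (fun n s => (hm.2 n s).le)
    (fun n s => k < prefixCount low n s) (fun ρ n h => ?_) fun n => ?_
  · simp only [prefixCount_eq_count] at h ⊢
    exact h.trans_le (Nat.count_monotone _ n.le_succ)
  · calc _ ≤ ∑ s, pathWeight κ p n s * Φ n s := by
          rw [Finset.sum_filter]
          gcongr with s
          split_ifs with h
          · simp [Φ, lowPotential, h.not_ge, Nat.sub_eq_zero_of_le h.le]
          · exact zero_le
      _ ≤ Φ 0 (fun _ => p) := hΦ n
      _ ≤ missProb Q ^ k := lowPotential_le _ _ _ _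

lemma measure_frequently_semPrio_le_eq_zero (hx : 1 ≤ x) (hrun : A.IsSemRun w p ρ₀)
    (hge : ∀ n, x ≤ A.semPrio (ρ₀ n) (w n)) (hgt : ∀ n, L ≤ n → x + 1 ≤ A.semPrio (ρ₀ n) (w n))
    (hm : A.IsWalkMeasure w p m) :
    m {ρ | ∃ᶠ n in atTop, A.semPrio (ρ n) (w n) ≤ x} = 0 := by
  have hmiss : missProb Q < 1 := ENNReal.sub_lt_self ENNReal.one_ne_top one_ne_zero
    (ENNReal.inv_ne_zero.mpr (ENNReal.natCast_ne_top _))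
  refine le_antisymm (ge_of_tendsto' (ENNReal.tendsto_pow_atTop_nhds_zero_of_lt_one hmiss)
    fun k => ?_) zero_le
  refine (measure_mono fun ρ hρ => ?_).trans (measure_exists_lt_prefixCount_le hx hrun hge hgt hm k)
  have hinf : (Set.ofPred fun i => L ≤ i ∧ A.semPrio (ρ i) (w i) ≤ x).Infinite :=
    Nat.frequently_atTop_iff_infinite.mp
      ((hρ.and_eventually (eventually_ge_atTop L)).mono fun _ h => ⟨h.2, h.1⟩)
  refine ⟨Nat.nth (fun i => L ≤ i ∧ A.semPrio (ρ i) (w i) ≤ x) k + 1, ?_⟩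
  rw [prefixCount_eq_count, Nat.count_nth_succ_of_infinite hinf]
  exact k.lt_succ_self

end RandomWalk

theorem statement_4_general {Q α : Type} [Fintype Q] [MeasurableSpace Q] {d : ℕ}
    (A : Layered Q α d) (p : Q) (x : ℕ) (hx1 : 1 ≤ x)
    (u : List α) (w : ℕ → α) (ρ0 : ℕ → Q)
    (hrun : A.IsSemRun (prependW u w) p ρ0)
    (hu : ∀ i : ℕ, i < u.length → x ≤ A.semPrio (ρ0 i) (prependW u w i))
    (hw : ∀ i : ℕ, u.length ≤ i → x + 1 ≤ A.semPrio (ρ0 i) (prependW u w i))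
    (m : MeasureTheory.Measure (ℕ → Q)) (hm : A.IsWalkMeasure (prependW u w) p m) :
    m {ρ : ℕ → Q | ∃ N : ℕ, ∀ n : ℕ, N ≤ n →
        x + 1 ≤ A.semPrio (ρ n) (prependW u w n)} = 1 := by
  have hge : ∀ i, x ≤ A.semPrio (ρ0 i) (prependW u w i) := fun i =>
    if hi : i < u.length then hu i hi else (Nat.le_succ x).trans (hw i (not_lt.mp hi))
  have : IsProbabilityMeasure m := hm.1
  refine prob_eq_one_of_compl_subset_null (fun ρ hρ => ?_)
    (measure_frequently_semPrio_le_eq_zero hx1 hrun hge hw hm)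
  rw [Set.mem_compl_iff, Set.mem_ofPred_eq, ← eventually_atTop, not_eventually] at hρ
  exact hρ.mono fun n h => Nat.le_of_lt_succ (not_le.mp h)

/-- If the word `u·w` admits a run of `⟦A⟧` from the leaf state `p`
with priorities `≥ x` along `u` and `≥ x+1` afterwards, then the random walk of `⟦A⟧`
over `u·w` from `p` almost surely eventually uses only transitions of priority `≥ x+1`. -/
theorem statement_4 {Q α : Type} [Fintype Q] [Fintype α] [Nonempty α] [MeasurableSpace Q]
    {d : ℕ} (hd : 1 ≤ d)
    (A : Layered Q α d) (p : Q) (hp : A.IsLeaf p)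
    (x : ℕ) (hx1 : 1 ≤ x) (hxd : x ≤ d)
    (u : List α) (w : ℕ → α) (ρ0 : ℕ → Q)
    (hrun : A.IsSemRun (prependW u w) p ρ0)
    (hu : ∀ i : ℕ, i < u.length → x ≤ A.semPrio (ρ0 i) (prependW u w i))
    (hw : ∀ i : ℕ, u.length ≤ i → x + 1 ≤ A.semPrio (ρ0 i) (prependW u w i))
    (m : MeasureTheory.Measure (ℕ → Q)) (hm : A.IsWalkMeasure (prependW u w) p m) :
    m {ρ : ℕ → Q | ∃ N : ℕ, ∀ n : ℕ, N ≤ n →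
        x + 1 ≤ A.semPrio (ρ n) (prependW u w n)} = 1 :=
  statement_4_general A p x hx1 u w ρ0 hrun hu hw m hm
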